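/- Let N ≥ 2 and K ≥ 1 be integers and set S = ∑_{k=0}^{K-1} N^{-k}. Then for every nonnegative real x, ⌈⌈x⌉ · S⌉ ≤ ⌈x · S⌉ + 2. In particular, the upper and lower bounds ⌈⌈L̄⌉/C⌉ and ⌈L̄/C⌉ on the optimal download cost differ by at most 2. -/

import Mathlib

theorem Int.ceil_ceil_mul_le (x : ℝ) {S : ℝ} (hS : 0 ≤ S) :
    ⌈(⌈x⌉ : ℝ) * S⌉ ≤ ⌈x * S⌉ + ⌈S⌉ := by
  have hmul : (⌈x⌉ : ℝ) * S ≤ x * S + S := by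
    nlinarith [Int.ceil_lt_add_one x]
  calc ⌈(⌈x⌉ : ℝ) * S⌉ ≤ ⌈x * S + S⌉ := Int.ceil_le_ceil hmul
    _ ≤ ⌈x * S⌉ + ⌈S⌉ := Int.ceil_add_le _ _

theorem geom_sum_one_div_le_two {N : ℕ} (hN : 2 ≤ N) (K : ℕ) :
    ∑ k ∈ Finset.range K, (1 / (N : ℝ)) ^ k ≤ 2 :=
  calc ∑ k ∈ Finset.range K, (1 / (N : ℝ)) ^ k ≤ ∑ k ∈ Finset.range K, (1 / 2 : ℝ) ^ k := by
        gcongr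
        exact_mod_cast hN
    _ ≤ 2 := sum_geometric_two_le K

theorem stmt_12_general (N K : ℕ) (hN : 2 ≤ N) (x : ℝ) :
    ⌈(⌈x⌉ : ℝ) * (∑ k ∈ Finset.range K, (1 / (N : ℝ)) ^ k)⌉ ≤
      ⌈x * (∑ k ∈ Finset.range K, (1 / (N : ℝ)) ^ k)⌉ + 2 := by
  set S := ∑ k ∈ Finset.range K, (1 / (N : ℝ)) ^ k
  have hS : 0 ≤ S := Finset.sum_nonneg fun k _ => by positivity
  have hceilS : ⌈S⌉ ≤ 2 := Int.ceil_le.mpr (by exact_mod_cast geom_sum_one_div_le_two hN K)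
  linarith [Int.ceil_ceil_mul_le x hS]

theorem stmt_12 (N K : ℕ) (hN : 2 ≤ N) (hK : 1 ≤ K) (x : ℝ) (hx : 0 ≤ x) :
    ⌈(⌈x⌉ : ℝ) * (∑ k ∈ Finset.range K, (1 / (N : ℝ)) ^ k)⌉ ≤
      ⌈x * (∑ k ∈ Finset.range K, (1 / (N : ℝ)) ^ k)⌉ + 2 :=
  stmt_12_general N K hN x
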